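/- Let V be a unital associative 𝔽-algebra with pairwise strongly commuting 2-fold derivations D₁,…,D_ℓ (i.e., (D_i)_L ∘ D_j = (D_j)_R ∘ D_i as maps V → V^{⊗3} for all i,j). Let B_{ij} ∈ V⊗V for 1 ≤ i,j ≤ ℓ, and let {{f,g}} := Σ_{i,j=1}^{ℓ} (D_j g) • B_{ij} • (D_i f)^σ be the associated 2-fold bracket. Assume: (1) B_{ij} = −(B_{ji})^σ for all i,j; and (2) for all i,j,k: T_{ijk} + (T_{jki})^σ + (T_{kij})^{σ²} = 0 in V^{⊗3}, where T_{ijk} := Σ_{h=1}^{ℓ} ((D_h)_L B_{jk}) •₃ B_{ih}. Then {{−,−}} makes V a double Poisson algebra: {{f,g}} = −({{g,f}})^σ and {{f,{{g,h}}}}_L + ({{g,{{h,f}}}}_L)^σ + ({{h,{{f,g}}}}_L)^{σ²} = 0 for all f,g,h ∈ V. -/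

import Mathlib

/-!
Skewsymmetry of `{{f,g}} = Σ (D_j g) • B_ij • (D_i f)^σ` is inherited summand by summand from
`B_ij = -(B_ji)^σ`, since `(t • c • s^σ)^σ = s • c^σ • t^σ`.

For the Jacobi identity, expand `{{f, {{g,h}}}}_L` with the Leibniz rule of the outer derivations
`D_l`: each summand `(D_j h) • B_ij • (D_i g)^σ` of `{{g,h}}` is differentiated in `D_j h`, in
`D_i g` or in `B_ij`. In the cyclic sum, the term where `D_l` hits `D_j h` cancels the term of the
next cyclic summand where `D_j` hits `D_l h`: strong commutativity identifies
`(D_l)_L (D_j h)` with `(D_j)_R (D_l h)`, and skewsymmetry of `B` supplies the sign. The terms where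
`D_l` hits `B_ij` assemble into `T_kij + (T_ijk)^σ + (T_jki)^σ²`, which vanishes by hypothesis.
-/

open TensorProduct LinearMap

section DPA

variable (𝔽 : Type) [Field 𝔽] (V : Type) [Ring V] [Algebra 𝔽 V]

/-- The swap `(u ⊗ v)^σ = v ⊗ u` on `V ⊗ V`. -/
noncomputable abbrev swap2 : V ⊗[𝔽] V ≃ₗ[𝔽] V ⊗[𝔽] V := TensorProduct.comm 𝔽 V V

/-- The cyclic permutation `(u ⊗ v ⊗ w)^σ = w ⊗ u ⊗ v` on `V ⊗ V ⊗ V = (V ⊗ V) ⊗ V`. -/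
noncomputable def sigma3 : (V ⊗[𝔽] V) ⊗[𝔽] V ≃ₗ[𝔽] (V ⊗[𝔽] V) ⊗[𝔽] V :=
  (TensorProduct.comm 𝔽 (V ⊗[𝔽] V) V).trans (TensorProduct.assoc 𝔽 V V V).symm

/-- Left multiplication `a · (u ⊗ v) = (a*u) ⊗ v` (outer bimodule structure). -/
noncomputable def lact2 (a : V) : V ⊗[𝔽] V →ₗ[𝔽] V ⊗[𝔽] V :=
  LinearMap.rTensor V (LinearMap.mulLeft 𝔽 a)

/-- Right multiplication `(u ⊗ v) · c = u ⊗ (v*c)` (outer bimodule structure). -/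
noncomputable def ract2 (c : V) : V ⊗[𝔽] V →ₗ[𝔽] V ⊗[𝔽] V :=
  LinearMap.lTensor V (LinearMap.mulRight 𝔽 c)

/-- `(u ⊗ v) ⋆₁ b = (u*b) ⊗ v`. -/
noncomputable def star1r (b : V) : V ⊗[𝔽] V →ₗ[𝔽] V ⊗[𝔽] V :=
  LinearMap.rTensor V (LinearMap.mulRight 𝔽 b)

/-- `a ⋆₁ (u ⊗ v) = u ⊗ (a*v)`. -/
noncomputable def star1l (a : V) : V ⊗[𝔽] V →ₗ[𝔽] V ⊗[𝔽] V :=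
  LinearMap.lTensor V (LinearMap.mulLeft 𝔽 a)

/-- The `•`-product on `V ⊗ V`:  `(u ⊗ v) • (x ⊗ y) = (u*x) ⊗ (y*v)`
(the multiplication of `V ⊗ Vᵒᵖ`). -/
noncomputable def bullet : V ⊗[𝔽] V →ₗ[𝔽] V ⊗[𝔽] V →ₗ[𝔽] V ⊗[𝔽] V :=
  TensorProduct.lift
    (((TensorProduct.mapBilinear (RingHom.id 𝔽) V V V V).comp (LinearMap.mul 𝔽 V)).compl₂
      ((LinearMap.mul 𝔽 V).flip))

/-- A `2`-fold bracket on `V`: an `𝔽`-bilinear map `V × V → V ⊗ V` satisfying the two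
Leibniz rules `{{a,bc}} = {{a,b}}·c + b·{{a,c}}` and `{{ab,c}} = {{a,c}} ⋆₁ b + a ⋆₁ {{b,c}}`. -/
def IsDoubleBracket (Br : V →ₗ[𝔽] V →ₗ[𝔽] V ⊗[𝔽] V) : Prop :=
  (∀ a b c : V, Br a (b * c) = ract2 𝔽 V c (Br a b) + lact2 𝔽 V b (Br a c)) ∧
  (∀ a b c : V, Br (a * b) c = star1r 𝔽 V b (Br a c) + star1l 𝔽 V a (Br b c))

variable {𝔽 V}

/-- `{{a, B}}_L` : apply the bracket to the first tensor factor. -/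
noncomputable def brL (Br : V →ₗ[𝔽] V →ₗ[𝔽] V ⊗[𝔽] V) (a : V) :
    V ⊗[𝔽] V →ₗ[𝔽] (V ⊗[𝔽] V) ⊗[𝔽] V :=
  LinearMap.rTensor V (Br a)

/-- `{{a, B}}_R` : apply the bracket to the second tensor factor. -/
noncomputable def brR (Br : V →ₗ[𝔽] V →ₗ[𝔽] V ⊗[𝔽] V) (a : V) :
    V ⊗[𝔽] V →ₗ[𝔽] (V ⊗[𝔽] V) ⊗[𝔽] V :=
  (TensorProduct.assoc 𝔽 V V V).symm.toLinearMap ∘ₗ LinearMap.lTensor V (Br a)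

variable (𝔽 V)

/-- `ρ₂` : swap the last two tensor factors of `V ⊗ V ⊗ V`. -/
noncomputable def rho2 : (V ⊗[𝔽] V) ⊗[𝔽] V ≃ₗ[𝔽] (V ⊗[𝔽] V) ⊗[𝔽] V :=
  (TensorProduct.assoc 𝔽 V V V).trans
    ((TensorProduct.congr (LinearEquiv.refl 𝔽 V) (TensorProduct.comm 𝔽 V V)).trans
      (TensorProduct.assoc 𝔽 V V V).symm)

variable {𝔽 V}

/-- Conjugated bullet action used to define the actions `•ᵢ` of `V ⊗ V` on `V ⊗ V ⊗ V`. -/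
noncomputable def conjAct (β : V ⊗[𝔽] V →ₗ[𝔽] V ⊗[𝔽] V →ₗ[𝔽] V ⊗[𝔽] V)
    (ρ : (V ⊗[𝔽] V) ⊗[𝔽] V ≃ₗ[𝔽] (V ⊗[𝔽] V) ⊗[𝔽] V) :
    V ⊗[𝔽] V →ₗ[𝔽] (V ⊗[𝔽] V) ⊗[𝔽] V →ₗ[𝔽] (V ⊗[𝔽] V) ⊗[𝔽] V :=
  (LinearMap.lcomp 𝔽 _ ρ.toLinearMap) ∘ₗ
    (LinearMap.llcomp 𝔽 ((V ⊗[𝔽] V) ⊗[𝔽] V) ((V ⊗[𝔽] V) ⊗[𝔽] V) ((V ⊗[𝔽] V) ⊗[𝔽] V)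
      ρ.symm.toLinearMap) ∘ₗ
    (LinearMap.rTensorHom V) ∘ₗ β

variable (𝔽 V)

/-- The right action `X •₁ A`, i.e. `(x⊗y⊗z) •₁ (a⊗b) = x⊗(y*a)⊗(b*z)`;
`bAct1R A X = X •₁ A`. -/
noncomputable def bAct1R : V ⊗[𝔽] V →ₗ[𝔽] (V ⊗[𝔽] V) ⊗[𝔽] V →ₗ[𝔽] (V ⊗[𝔽] V) ⊗[𝔽] V :=
  conjAct (bullet 𝔽 V).flip ((sigma3 𝔽 V).trans (sigma3 𝔽 V))

/-- The left action `A •₂ X`, i.e. `(a⊗b) •₂ (x⊗y⊗z) = (a*x)⊗y⊗(z*b)`. -/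
noncomputable def bAct2L : V ⊗[𝔽] V →ₗ[𝔽] (V ⊗[𝔽] V) ⊗[𝔽] V →ₗ[𝔽] (V ⊗[𝔽] V) ⊗[𝔽] V :=
  conjAct (bullet 𝔽 V) (rho2 𝔽 V)

/-- The right action `X •₃ A`, i.e. `(x⊗y⊗z) •₃ (a⊗b) = (x*a)⊗(b*y)⊗z`;
`bAct3R A X = X •₃ A`. -/
noncomputable def bAct3R : V ⊗[𝔽] V →ₗ[𝔽] (V ⊗[𝔽] V) ⊗[𝔽] V →ₗ[𝔽] (V ⊗[𝔽] V) ⊗[𝔽] V :=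
  conjAct (bullet 𝔽 V).flip (LinearEquiv.refl 𝔽 ((V ⊗[𝔽] V) ⊗[𝔽] V))

/-- `a ⋆₁ (x⊗y⊗z) = x⊗(a*y)⊗z`. -/
noncomputable def slot2L (a : V) : (V ⊗[𝔽] V) ⊗[𝔽] V →ₗ[𝔽] (V ⊗[𝔽] V) ⊗[𝔽] V :=
  LinearMap.rTensor V (LinearMap.lTensor V (LinearMap.mulLeft 𝔽 a))

/-- `(x⊗y⊗z) ⋆₁ b = x⊗(y*b)⊗z`. -/
noncomputable def slot2R (b : V) : (V ⊗[𝔽] V) ⊗[𝔽] V →ₗ[𝔽] (V ⊗[𝔽] V) ⊗[𝔽] V :=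
  LinearMap.rTensor V (LinearMap.lTensor V (LinearMap.mulRight 𝔽 b))

/-- `a ⋆₂ (x⊗y⊗z) = x⊗y⊗(a*z)`. -/
noncomputable def slot3L (a : V) : (V ⊗[𝔽] V) ⊗[𝔽] V →ₗ[𝔽] (V ⊗[𝔽] V) ⊗[𝔽] V :=
  LinearMap.lTensor (V ⊗[𝔽] V) (LinearMap.mulLeft 𝔽 a)

/-- `(x⊗y⊗z) ⋆₂ b = (x*b)⊗y⊗z`. -/
noncomputable def slot1R (b : V) : (V ⊗[𝔽] V) ⊗[𝔽] V →ₗ[𝔽] (V ⊗[𝔽] V) ⊗[𝔽] V :=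
  LinearMap.rTensor V (LinearMap.rTensor V (LinearMap.mulRight 𝔽 b))

/-- outer left: `a · (x⊗y⊗z) = (a*x)⊗y⊗z`. -/
noncomputable def slot1L (a : V) : (V ⊗[𝔽] V) ⊗[𝔽] V →ₗ[𝔽] (V ⊗[𝔽] V) ⊗[𝔽] V :=
  LinearMap.rTensor V (LinearMap.rTensor V (LinearMap.mulLeft 𝔽 a))

/-- outer right: `(x⊗y⊗z) · b = x⊗y⊗(z*b)`. -/
noncomputable def slot3R (b : V) : (V ⊗[𝔽] V) ⊗[𝔽] V →ₗ[𝔽] (V ⊗[𝔽] V) ⊗[𝔽] V :=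
  LinearMap.lTensor (V ⊗[𝔽] V) (LinearMap.mulRight 𝔽 b)

variable {𝔽 V}

/-- The triple bracket `{{a,b,c}}`. -/
noncomputable def triple (Br : V →ₗ[𝔽] V →ₗ[𝔽] V ⊗[𝔽] V) (a b c : V) :
    (V ⊗[𝔽] V) ⊗[𝔽] V :=
  brL Br a (Br b c) + sigma3 𝔽 V (brL Br b (Br c a)) +
    sigma3 𝔽 V (sigma3 𝔽 V (brL Br c (Br a b)))

variable (𝔽 V)

/-- Skewsymmetry of a 2-fold bracket. -/
def IsSkew (Br : V →ₗ[𝔽] V →ₗ[𝔽] V ⊗[𝔽] V) : Prop :=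
  ∀ a b : V, Br a b = - swap2 𝔽 V (Br b a)

/-- The span of commutators `[V,V]`. -/
def commSub : Submodule 𝔽 V := Submodule.span 𝔽 {x : V | ∃ a b : V, x = a * b - b * a}

variable {𝔽 V}

/-- The associated bracket `{a,b} = m {{a,b}}`. -/
noncomputable def sb (Br : V →ₗ[𝔽] V →ₗ[𝔽] V ⊗[𝔽] V) (a b : V) : V :=
  LinearMap.mul' 𝔽 V (Br a b)

/-- A 2-fold derivation: `D(ab) = (Da)·b + a·(Db)`. -/
def Is2Deriv (D : V →ₗ[𝔽] V ⊗[𝔽] V) : Prop :=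
  ∀ a b : V, D (a * b) = ract2 𝔽 V b (D a) + lact2 𝔽 V a (D b)

/-- `D` and `E` strongly commute: `D_L ∘ E = E_R ∘ D`. -/
def StronglyComm (D E : V →ₗ[𝔽] V ⊗[𝔽] V) : Prop :=
  ∀ f : V, LinearMap.rTensor V D (E f) =
    (TensorProduct.assoc 𝔽 V V V).symm (LinearMap.lTensor V E (D f))


/-- The master-formula bracket `{{f,g}} := Σ_{i,j} (D_j g) • B_{ij} • (D_i f)^σ`,
as a bundled bilinear map. -/
noncomputable def masterBr (𝔽 : Type) [Field 𝔽] (V : Type) [Ring V] [Algebra 𝔽 V]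
    {ℓ : ℕ} (D : Fin ℓ → (V →ₗ[𝔽] V ⊗[𝔽] V)) (B : Fin ℓ → Fin ℓ → V ⊗[𝔽] V) :
    V →ₗ[𝔽] V →ₗ[𝔽] V ⊗[𝔽] V :=
  ∑ i : Fin ℓ, ∑ j : Fin ℓ,
    (LinearMap.lcomp 𝔽 _ (((bullet 𝔽 V).flip (B i j)) ∘ₗ D j)) ∘ₗ
      (bullet 𝔽 V).flip ∘ₗ (swap2 𝔽 V).toLinearMap ∘ₗ D i

/-- `T_{ijk} := Σ_{h} ((D_h)_L B_{jk}) •₃ B_{ih}`. -/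
noncomputable def Tjac (𝔽 : Type) [Field 𝔽] (V : Type) [Ring V] [Algebra 𝔽 V]
    {ℓ : ℕ} (D : Fin ℓ → (V →ₗ[𝔽] V ⊗[𝔽] V)) (B : Fin ℓ → Fin ℓ → V ⊗[𝔽] V)
    (i j k : Fin ℓ) : (V ⊗[𝔽] V) ⊗[𝔽] V :=
  ∑ h : Fin ℓ, bAct3R 𝔽 V (B i h) (LinearMap.rTensor V (D h) (B j k))

lemma Finset.sum_sum_sum_rotate {ι M : Type} [Fintype ι] [AddCommMonoid M] (F : ι → ι → ι → M) :
    ∑ i, ∑ j, ∑ k, F i j k = ∑ i, ∑ j, ∑ k, F j k i := by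
  symm
  rw [Finset.sum_comm]
  exact Finset.sum_congr rfl fun _ _ => Finset.sum_comm

lemma Finset.sum_sum_sum_sum_reindex {ι M : Type} [Fintype ι] [AddCommMonoid M]
    (F : ι → ι → ι → ι → M) :
    ∑ i, ∑ j, ∑ k, ∑ l, F i j k l = ∑ i, ∑ j, ∑ k, ∑ l, F l k i j := by
  simp only [← Fintype.sum_prod_type']
  exact Fintype.sum_equiv
    ⟨fun x => (x.2.2.1, x.2.2.2, x.2.1, x.1), fun y => (y.2.2.2, y.2.2.1, y.1, y.2.1),
      fun _ => rfl, fun _ => rfl⟩ _ _ fun _ => rfl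

section Lemmas

variable {𝔽 : Type} [Field 𝔽] {V : Type} [Ring V] [Algebra 𝔽 V]

@[simp] lemma bullet_tmul (a b c d : V) :
    bullet 𝔽 V (a ⊗ₜ[𝔽] b) (c ⊗ₜ[𝔽] d) = (a * c) ⊗ₜ[𝔽] (d * b) := by
  simp [bullet, TensorProduct.mapBilinear]

@[simp] lemma lact2_tmul (a u v : V) : lact2 𝔽 V a (u ⊗ₜ[𝔽] v) = (a * u) ⊗ₜ[𝔽] v := by
  simp [lact2]

@[simp] lemma ract2_tmul (c u v : V) : ract2 𝔽 V c (u ⊗ₜ[𝔽] v) = u ⊗ₜ[𝔽] (v * c) := by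
  simp [ract2]

@[simp] lemma sigma3_tmul (a b c : V) :
    sigma3 𝔽 V ((a ⊗ₜ[𝔽] b) ⊗ₜ[𝔽] c) = (c ⊗ₜ[𝔽] a) ⊗ₜ[𝔽] b := by
  simp [sigma3]

@[simp] lemma bAct3R_tmul (A W : V ⊗[𝔽] V) (r : V) :
    bAct3R 𝔽 V A (W ⊗ₜ[𝔽] r) = bullet 𝔽 V W A ⊗ₜ[𝔽] r := by
  simp [bAct3R, conjAct]

@[simp] lemma bAct1R_tmul (a b r : V) (W : V ⊗[𝔽] V) :
    bAct1R 𝔽 V (a ⊗ₜ[𝔽] b) (W ⊗ₜ[𝔽] r) = ract2 𝔽 V a W ⊗ₜ[𝔽] (b * r) := by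
  induction W using TensorProduct.induction_on with
  | zero => simp
  | tmul x y => simp [bAct1R, conjAct, sigma3]
  | add W W' hW hW' => simp only [add_tmul, map_add, hW, hW']

@[simp] lemma bAct2L_tmul (a b r : V) (W : V ⊗[𝔽] V) :
    bAct2L 𝔽 V (a ⊗ₜ[𝔽] b) (W ⊗ₜ[𝔽] r) = lact2 𝔽 V a W ⊗ₜ[𝔽] (r * b) := by
  induction W using TensorProduct.induction_on with
  | zero => simp
  | tmul x y => simp [bAct2L, conjAct, rho2]
  | add W W' hW hW' => simp only [add_tmul, map_add, hW, hW']

lemma bullet_assoc (X Y Z : V ⊗[𝔽] V) :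
    bullet 𝔽 V (bullet 𝔽 V X Y) Z = bullet 𝔽 V X (bullet 𝔽 V Y Z) := by
  suffices (bullet 𝔽 V).compr₂ (bullet 𝔽 V) =
      (LinearMap.llcomp 𝔽 _ _ _ ∘ₗ bullet 𝔽 V).compl₂ (bullet 𝔽 V) from congr($this X Y Z)
  ext; simp [mul_assoc]

lemma swap2_bullet (X Y : V ⊗[𝔽] V) :
    swap2 𝔽 V (bullet 𝔽 V X Y) = bullet 𝔽 V (swap2 𝔽 V Y) (swap2 𝔽 V X) := by
  suffices (bullet 𝔽 V).compr₂ (swap2 𝔽 V).toLinearMap =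
      ((bullet 𝔽 V ∘ₗ (swap2 𝔽 V).toLinearMap).compl₂ (swap2 𝔽 V).toLinearMap).flip from
    congr($this X Y)
  ext; simp

lemma sigma3_sigma3_sigma3 (X : (V ⊗[𝔽] V) ⊗[𝔽] V) :
    sigma3 𝔽 V (sigma3 𝔽 V (sigma3 𝔽 V X)) = X := by
  suffices (sigma3 𝔽 V).toLinearMap ∘ₗ (sigma3 𝔽 V).toLinearMap ∘ₗ (sigma3 𝔽 V).toLinearMap =
      LinearMap.id from congr($this X)
  ext; simp

lemma sigma3_bAct3R (A : V ⊗[𝔽] V) (X : (V ⊗[𝔽] V) ⊗[𝔽] V) :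
    sigma3 𝔽 V (bAct3R 𝔽 V A X) = bAct1R 𝔽 V A (sigma3 𝔽 V X) := by
  suffices (bAct3R 𝔽 V).compr₂ (sigma3 𝔽 V).toLinearMap =
      (bAct1R 𝔽 V).compl₂ (sigma3 𝔽 V).toLinearMap from congr($this A X)
  ext; simp

lemma sigma3_bAct1R (A : V ⊗[𝔽] V) (X : (V ⊗[𝔽] V) ⊗[𝔽] V) :
    sigma3 𝔽 V (bAct1R 𝔽 V A X) = bAct2L 𝔽 V (swap2 𝔽 V A) (sigma3 𝔽 V X) := by
  suffices (bAct1R 𝔽 V).compr₂ (sigma3 𝔽 V).toLinearMap =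
      (bAct2L 𝔽 V ∘ₗ (swap2 𝔽 V).toLinearMap).compl₂ (sigma3 𝔽 V).toLinearMap from
    congr($this A X)
  ext; simp

lemma sigma3_bAct2L (A : V ⊗[𝔽] V) (X : (V ⊗[𝔽] V) ⊗[𝔽] V) :
    sigma3 𝔽 V (bAct2L 𝔽 V A X) = bAct3R 𝔽 V (swap2 𝔽 V A) (sigma3 𝔽 V X) := by
  suffices (bAct2L 𝔽 V).compr₂ (sigma3 𝔽 V).toLinearMap =
      (bAct3R 𝔽 V ∘ₗ (swap2 𝔽 V).toLinearMap).compl₂ (sigma3 𝔽 V).toLinearMap from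
    congr($this A X)
  ext; simp

lemma bAct1R_bAct2L_comm (A A' : V ⊗[𝔽] V) (X : (V ⊗[𝔽] V) ⊗[𝔽] V) :
    bAct1R 𝔽 V A (bAct2L 𝔽 V A' X) = bAct2L 𝔽 V A' (bAct1R 𝔽 V A X) := by
  suffices (LinearMap.llcomp 𝔽 _ _ _ ∘ₗ bAct1R 𝔽 V).compl₂ (bAct2L 𝔽 V) =
      ((LinearMap.llcomp 𝔽 _ _ _ ∘ₗ bAct2L 𝔽 V).compl₂ (bAct1R 𝔽 V)).flip from
    congr($this A A' X)
  ext; simp [mul_assoc]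

lemma bAct1R_bAct3R_comm (A A' : V ⊗[𝔽] V) (X : (V ⊗[𝔽] V) ⊗[𝔽] V) :
    bAct1R 𝔽 V A (bAct3R 𝔽 V A' X) = bAct3R 𝔽 V A' (bAct1R 𝔽 V A X) := by
  suffices (LinearMap.llcomp 𝔽 _ _ _ ∘ₗ bAct1R 𝔽 V).compl₂ (bAct3R 𝔽 V) =
      ((LinearMap.llcomp 𝔽 _ _ _ ∘ₗ bAct3R 𝔽 V).compl₂ (bAct1R 𝔽 V)).flip from
    congr($this A A' X)
  ext; simp [mul_assoc]

lemma bAct2L_bAct3R_comm (A A' : V ⊗[𝔽] V) (X : (V ⊗[𝔽] V) ⊗[𝔽] V) :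
    bAct2L 𝔽 V A (bAct3R 𝔽 V A' X) = bAct3R 𝔽 V A' (bAct2L 𝔽 V A X) := by
  suffices (LinearMap.llcomp 𝔽 _ _ _ ∘ₗ bAct2L 𝔽 V).compl₂ (bAct3R 𝔽 V) =
      ((LinearMap.llcomp 𝔽 _ _ _ ∘ₗ bAct3R 𝔽 V).compl₂ (bAct2L 𝔽 V)).flip from
    congr($this A A' X)
  ext; simp [mul_assoc]

lemma bAct3R_bAct3R (A A' : V ⊗[𝔽] V) (X : (V ⊗[𝔽] V) ⊗[𝔽] V) :
    bAct3R 𝔽 V A' (bAct3R 𝔽 V A X) = bAct3R 𝔽 V (bullet 𝔽 V A A') X := by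
  suffices ((LinearMap.llcomp 𝔽 _ _ _ ∘ₗ bAct3R 𝔽 V).compl₂ (bAct3R 𝔽 V)).flip =
      (bullet 𝔽 V).compr₂ (bAct3R 𝔽 V) from congr($this A A' X)
  ext; simp [mul_assoc]

lemma lact2_lact2 (a b : V) (W : V ⊗[𝔽] V) : lact2 𝔽 V a (lact2 𝔽 V b W) = lact2 𝔽 V (a * b) W := by
  suffices lact2 𝔽 V a ∘ₗ lact2 𝔽 V b = lact2 𝔽 V (a * b) from congr($this W)
  ext; simp [mul_assoc]

lemma lact2_ract2_comm (a b : V) (W : V ⊗[𝔽] V) :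
    lact2 𝔽 V a (ract2 𝔽 V b W) = ract2 𝔽 V b (lact2 𝔽 V a W) := by
  suffices lact2 𝔽 V a ∘ₗ ract2 𝔽 V b = ract2 𝔽 V b ∘ₗ lact2 𝔽 V a from congr($this W)
  ext; simp

lemma sigma3_sigma3_assoc_symm_tmul (x : V) (W : V ⊗[𝔽] V) :
    sigma3 𝔽 V (sigma3 𝔽 V ((TensorProduct.assoc 𝔽 V V V).symm (x ⊗ₜ[𝔽] W))) = W ⊗ₜ[𝔽] x := by
  induction W using TensorProduct.induction_on with
  | zero => simp
  | tmul y z => simp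
  | add W W' hW hW' => simp only [tmul_add, add_tmul, map_add, hW, hW']

noncomputable def sandwich (t c s : V ⊗[𝔽] V) : V ⊗[𝔽] V :=
  bullet 𝔽 V (bullet 𝔽 V t c) (swap2 𝔽 V s)

lemma sandwich_eq_swap2 (t c s : V ⊗[𝔽] V) :
    sandwich t c s = swap2 𝔽 V (sandwich s (swap2 𝔽 V c) t) := by
  simp only [sandwich, swap2_bullet, comm_comm, bullet_assoc]

lemma rTensor_sandwich {D : V →ₗ[𝔽] V ⊗[𝔽] V} (hD : Is2Deriv D) (t c s : V ⊗[𝔽] V) :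
    rTensor V D (sandwich t c s) =
      bAct1R 𝔽 V (bullet 𝔽 V c (swap2 𝔽 V s)) (rTensor V D t)
      + bAct2L 𝔽 V (bullet 𝔽 V t c)
          (sigma3 𝔽 V (sigma3 𝔽 V ((TensorProduct.assoc 𝔽 V V V).symm (lTensor V D s))))
      + bAct1R 𝔽 V (swap2 𝔽 V s) (bAct2L 𝔽 V t (rTensor V D c)) := by
  induction t using TensorProduct.induction_on with
  | zero => simp [sandwich]
  | add t t' ht ht' =>
    simp only [sandwich, map_add, LinearMap.add_apply] at ht ht' ⊢
    rw [ht, ht']; abel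
  | tmul u v =>
  induction c using TensorProduct.induction_on with
  | zero => simp [sandwich]
  | add c c' hc hc' =>
    simp only [sandwich, map_add, LinearMap.add_apply] at hc hc' ⊢
    rw [hc, hc']; abel
  | tmul c₁ c₂ =>
  induction s using TensorProduct.induction_on with
  | zero => simp [sandwich]
  | add s s' hs hs' =>
    simp only [sandwich, map_add, LinearMap.add_apply] at hs hs' ⊢
    rw [hs, hs']; abel
  | tmul x y =>
    simp only [sandwich, bullet_tmul, comm_tmul, rTensor_tmul, lTensor_tmul, mul_assoc,
      hD _ (c₁ * y), hD c₁ y, map_add, add_tmul, bAct1R_tmul, bAct2L_tmul,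
      sigma3_sigma3_assoc_symm_tmul, lact2_lact2, lact2_ract2_comm]
    abel

lemma sigma3_bAct2L_bAct3R_sigma3_sigma3 (A A' : V ⊗[𝔽] V) (X : (V ⊗[𝔽] V) ⊗[𝔽] V) :
    sigma3 𝔽 V (bAct2L 𝔽 V A (bAct3R 𝔽 V A' (sigma3 𝔽 V (sigma3 𝔽 V X))))
      = bAct3R 𝔽 V (swap2 𝔽 V A) (bAct1R 𝔽 V A' X) := by
  rw [sigma3_bAct2L, sigma3_bAct3R, sigma3_sigma3_sigma3]

noncomputable def act3 (F G H : V ⊗[𝔽] V) : (V ⊗[𝔽] V) ⊗[𝔽] V →ₗ[𝔽] (V ⊗[𝔽] V) ⊗[𝔽] V :=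
  bAct1R 𝔽 V (swap2 𝔽 V G) ∘ₗ bAct2L 𝔽 V H ∘ₗ bAct3R 𝔽 V (swap2 𝔽 V F)

lemma sigma3_act3 (F G H : V ⊗[𝔽] V) (X : (V ⊗[𝔽] V) ⊗[𝔽] V) :
    sigma3 𝔽 V (act3 F G H X) = act3 H F G (sigma3 𝔽 V X) := by
  simp only [act3, LinearMap.comp_apply, sigma3_bAct1R, comm_comm, sigma3_bAct2L, sigma3_bAct3R,
    bAct1R_bAct3R_comm, bAct2L_bAct3R_comm, bAct1R_bAct2L_comm]

section Master

variable {ℓ : ℕ} (D : Fin ℓ → (V →ₗ[𝔽] V ⊗[𝔽] V)) (B : Fin ℓ → Fin ℓ → V ⊗[𝔽] V)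

lemma masterBr_apply (f g : V) :
    masterBr 𝔽 V D B f g = ∑ i, ∑ j, sandwich (D j g) (B i j) (D i f) := by
  simp [masterBr, sandwich, LinearMap.sum_apply]

lemma masterBr_isSkew (hBskew : ∀ i j, B i j = - swap2 𝔽 V (B j i)) :
    IsSkew 𝔽 V (masterBr 𝔽 V D B) := by
  intro f g
  simp only [masterBr_apply, map_sum, ← Finset.sum_neg_distrib]
  rw [Finset.sum_comm]
  refine Finset.sum_congr rfl fun i _ => Finset.sum_congr rfl fun j _ => ?_
  rw [sandwich_eq_swap2, hBskew i j]
  simp [sandwich]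

lemma brL_masterBr_apply (f : V) (T : V ⊗[𝔽] V) :
    brL (masterBr 𝔽 V D B) f T =
      ∑ k, ∑ l, bAct3R 𝔽 V (bullet 𝔽 V (B k l) (swap2 𝔽 V (D k f))) (rTensor V (D l) T) := by
  induction T using TensorProduct.induction_on with
  | zero => simp
  | tmul W r => simp [brL, masterBr_apply, sandwich, sum_tmul, bullet_assoc]
  | add T T' hT hT' => simp only [map_add, hT, hT', ← Finset.sum_add_distrib]

/- The three parts of `{{f, {{g,h}}}}_L` (see `brL_masterBr_masterBr`), named after what the
outer derivation `D l` falls on: `D j h`, `D i g` (through `(D i g)^σ`) or `B i j`. -/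
noncomputable def termOnH (f g h : V) (i j k l : Fin ℓ) : (V ⊗[𝔽] V) ⊗[𝔽] V :=
  bAct1R 𝔽 V (bullet 𝔽 V (B i j) (swap2 𝔽 V (D i g)))
    (bAct3R 𝔽 V (bullet 𝔽 V (B k l) (swap2 𝔽 V (D k f))) (rTensor V (D l) (D j h)))

noncomputable def termOnG (f g h : V) (i j k l : Fin ℓ) : (V ⊗[𝔽] V) ⊗[𝔽] V :=
  bAct2L 𝔽 V (bullet 𝔽 V (D j h) (B i j))
    (bAct3R 𝔽 V (bullet 𝔽 V (B k l) (swap2 𝔽 V (D k f)))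
      (sigma3 𝔽 V (sigma3 𝔽 V ((TensorProduct.assoc 𝔽 V V V).symm (lTensor V (D l) (D i g))))))

noncomputable def termOnB (f g h : V) (i j k l : Fin ℓ) : (V ⊗[𝔽] V) ⊗[𝔽] V :=
  bAct1R 𝔽 V (swap2 𝔽 V (D i g)) (bAct2L 𝔽 V (D j h)
    (bAct3R 𝔽 V (bullet 𝔽 V (B k l) (swap2 𝔽 V (D k f))) (rTensor V (D l) (B i j))))

lemma brL_masterBr_masterBr (hD : ∀ i, Is2Deriv (D i)) (f g h : V) :
    brL (masterBr 𝔽 V D B) f (masterBr 𝔽 V D B g h) =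
      ∑ i, ∑ j, ∑ k, ∑ l,
        (termOnH D B f g h i j k l + termOnG D B f g h i j k l + termOnB D B f g h i j k l) := by
  simp only [masterBr_apply D B g h, map_sum, brL_masterBr_apply, rTensor_sandwich (hD _), map_add,
    termOnH, termOnG, termOnB, bAct1R_bAct3R_comm, bAct2L_bAct3R_comm]

lemma sum_termOnH_add_sigma3_sum_termOnG (hcomm : ∀ i j, StronglyComm (D i) (D j))
    (hBskew : ∀ i j, B i j = - swap2 𝔽 V (B j i)) (f g h : V) :
    ∑ i, ∑ j, ∑ k, ∑ l, termOnH D B f g h i j k l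
      + sigma3 𝔽 V (∑ i, ∑ j, ∑ k, ∑ l, termOnG D B g h f i j k l) = 0 := by
  simp only [map_sum]
  rw [Finset.sum_sum_sum_sum_reindex (fun i j k l => sigma3 𝔽 V (termOnG D B g h f i j k l))]
  simp only [← Finset.sum_add_distrib]
  refine Finset.sum_eq_zero fun i _ => Finset.sum_eq_zero fun j _ =>
    Finset.sum_eq_zero fun k _ => Finset.sum_eq_zero fun l _ => ?_
  rw [termOnH, termOnG, ← hcomm l j h, sigma3_bAct2L_bAct3R_sigma3_sigma3, swap2_bullet, hBskew l k]
  simp [bAct1R_bAct3R_comm]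

lemma sum_termOnB (f g h : V) (i j k : Fin ℓ) :
    ∑ l, termOnB D B f g h i j k l = act3 (D k f) (D i g) (D j h) (Tjac 𝔽 V D B k i j) := by
  simp only [termOnB, act3, Tjac, ← bAct3R_bAct3R, LinearMap.comp_apply, map_sum]

lemma sum_termOnB_add_sigma3_add_sigma3_sigma3
    (hBjac : ∀ i j k, Tjac 𝔽 V D B i j k + sigma3 𝔽 V (Tjac 𝔽 V D B j k i)
      + sigma3 𝔽 V (sigma3 𝔽 V (Tjac 𝔽 V D B k i j)) = 0) (f g h : V) :
    ∑ i, ∑ j, ∑ k, ∑ l, termOnB D B f g h i j k l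
      + sigma3 𝔽 V (∑ i, ∑ j, ∑ k, ∑ l, termOnB D B g h f i j k l)
      + sigma3 𝔽 V (sigma3 𝔽 V (∑ i, ∑ j, ∑ k, ∑ l, termOnB D B h f g i j k l)) = 0 := by
  simp only [sum_termOnB, map_sum, sigma3_act3]
  rw [Finset.sum_sum_sum_rotate fun i j k => act3 (D k f) (D i g) (D j h) (Tjac 𝔽 V D B k i j),
    ← Finset.sum_sum_sum_rotate fun i j k =>
      act3 (D i f) (D j g) (D k h) (sigma3 𝔽 V (Tjac 𝔽 V D B j k i))]
  simp only [← Finset.sum_add_distrib, ← map_add, hBjac, map_zero, Finset.sum_const_zero]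

end Master

end Lemmas

theorem statement_12_general (𝔽 : Type) [Field 𝔽] (V : Type) [Ring V] [Algebra 𝔽 V]
    {ℓ : ℕ} (D : Fin ℓ → (V →ₗ[𝔽] V ⊗[𝔽] V)) (hD : ∀ i, Is2Deriv (D i))
    (hcomm : ∀ i j, StronglyComm (D i) (D j))
    (B : Fin ℓ → Fin ℓ → V ⊗[𝔽] V)
    (hBskew : ∀ i j, B i j = - swap2 𝔽 V (B j i))
    (hBjac : ∀ i j k, Tjac 𝔽 V D B i j k + sigma3 𝔽 V (Tjac 𝔽 V D B j k i)
      + sigma3 𝔽 V (sigma3 𝔽 V (Tjac 𝔽 V D B k i j)) = 0) :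
    IsSkew 𝔽 V (masterBr 𝔽 V D B) ∧
    (∀ f g h : V, triple (masterBr 𝔽 V D B) f g h = 0) := by
  refine ⟨masterBr_isSkew D B hBskew, fun f g h => ?_⟩
  have hfgh := sum_termOnH_add_sigma3_sum_termOnG D B hcomm hBskew f g h
  have hghf := congrArg (sigma3 𝔽 V) (sum_termOnH_add_sigma3_sum_termOnG D B hcomm hBskew g h f)
  have hhfg := congrArg (fun X => sigma3 𝔽 V (sigma3 𝔽 V X))
    (sum_termOnH_add_sigma3_sum_termOnG D B hcomm hBskew h f g)
  simp only [map_add, map_zero, sigma3_sigma3_sigma3] at hghf hhfg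
  simp only [triple, brL_masterBr_masterBr D B hD, Finset.sum_add_distrib, map_add]
  linear_combination (norm := abel) hfgh + hghf + hhfg
    + sum_termOnB_add_sigma3_add_sigma3_sigma3 D B hBjac f g h

/-- master formula with strongly commuting 2-fold derivations,
skewsymmetric `B` and Jacobi identity on generators gives a double Poisson algebra. -/
theorem statement_12 (𝔽 : Type) [Field 𝔽] [CharZero 𝔽] (V : Type) [Ring V] [Algebra 𝔽 V]
    {ℓ : ℕ} (D : Fin ℓ → (V →ₗ[𝔽] V ⊗[𝔽] V)) (hD : ∀ i, Is2Deriv (D i))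
    (hcomm : ∀ i j, StronglyComm (D i) (D j))
    (B : Fin ℓ → Fin ℓ → V ⊗[𝔽] V)
    (hBskew : ∀ i j, B i j = - swap2 𝔽 V (B j i))
    (hBjac : ∀ i j k, Tjac 𝔽 V D B i j k + sigma3 𝔽 V (Tjac 𝔽 V D B j k i)
      + sigma3 𝔽 V (sigma3 𝔽 V (Tjac 𝔽 V D B k i j)) = 0) :
    IsSkew 𝔽 V (masterBr 𝔽 V D B) ∧
    (∀ f g h : V, triple (masterBr 𝔽 V D B) f g h = 0) :=
  statement_12_general 𝔽 V D hD hcomm B hBskew hBjac
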